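/- arXiv:2605.05442 — 3 statements merged into one kernel-verified Lean document; each statement's English description precedes it below -/
import Mathlib

section
/- Let a ∈ [0,1) and b ∈ ℝ. Define I(u) = ∫₀¹ s^(-a) (u+s)^(-b) ds for u ∈ (0,1]. Then there exist positive constants c, C (depending only on a, b) such that uniformly in u ∈ (0,1]: if a+b < 1 then c ≤ I(u) ≤ C; if a+b = 1 then c(1 + log(1/u)) ≤ I(u) ≤ C(1 + log(1/u)); if a+b > 1 then c·u^(1-a-b) ≤ I(u) ≤ C·u^(1-a-b). -/
open Set MeasureTheory intervalIntegral

private lemma rpow_base_anti {x y z : ℝ} (hx : 0 < x) (hxy : x ≤ y) (hz : 0 ≤ z) :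
    y ^ (-z) ≤ x ^ (-z) :=
  Real.rpow_le_rpow_of_nonpos hx hxy (neg_nonpos.mpr hz)

private lemma intF {a b u x y : ℝ} (ha1 : a < 1) (hu : 0 < u) (hx : 0 ≤ x) (hy : 0 ≤ y) :
    IntervalIntegrable (fun s => s ^ (-a) * (u + s) ^ (-b)) volume x y := by
  refine (intervalIntegral.intervalIntegrable_rpow' (by linarith)).mul_continuousOn ?_
  refine ContinuousOn.rpow_const ((continuous_const.add continuous_id).continuousOn)
    (fun s hs => Or.inl ?_)
  have h1 : min x y ≤ s := hs.1
  have h0 : (0:ℝ) ≤ s := le_trans (le_min hx hy) h1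
  exact ne_of_gt (by linarith)

private lemma int_mono_Ioc {f g : ℝ → ℝ} {x y : ℝ} (hxy : x ≤ y)
    (hf : IntervalIntegrable f volume x y) (hg : IntervalIntegrable g volume x y)
    (h : ∀ s ∈ Ioc x y, f s ≤ g s) :
    ∫ s in x..y, f s ≤ ∫ s in x..y, g s := by
  rw [intervalIntegral.integral_of_le hxy, intervalIntegral.integral_of_le hxy]
  exact setIntegral_mono_on hf.1 hg.1 measurableSet_Ioc h

private lemma int_rpow_zero {p : ℝ} (hp : p < 1) (t : ℝ) :
    ∫ s in (0:ℝ)..t, s ^ (-p) = t ^ (1 - p) / (1 - p) := by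
  rw [integral_rpow (Or.inl (by linarith))]
  rw [Real.zero_rpow (ne_of_gt (by linarith : (0:ℝ) < -p + 1))]
  rw [show -p + 1 = 1 - p by ring]
  ring

private lemma pt_upper {a b u s : ℝ} (hb : 0 ≤ b) (hu : 0 ≤ u) (hs : 0 < s) :
    s ^ (-a) * (u + s) ^ (-b) ≤ s ^ (-(a + b)) := by
  have h1 : (u + s) ^ (-b) ≤ s ^ (-b) := rpow_base_anti hs (by linarith) hb
  calc s ^ (-a) * (u + s) ^ (-b) ≤ s ^ (-a) * s ^ (-b) :=
        mul_le_mul_of_nonneg_left h1 (Real.rpow_nonneg hs.le _)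
    _ = s ^ (-(a + b)) := by rw [← Real.rpow_add hs, show -a + -b = -(a + b) by ring]

private lemma F_nonneg {a b u : ℝ} (hu : 0 ≤ u) {x y : ℝ} (hx : 0 ≤ x) (hxy : x ≤ y) :
    0 ≤ ∫ s in x..y, s ^ (-a) * (u + s) ^ (-b) := by
  refine intervalIntegral.integral_nonneg hxy (fun s hs => ?_)
  exact mul_nonneg (Real.rpow_nonneg (le_trans hx hs.1) _)
    (Real.rpow_nonneg (by linarith [hs.1, le_trans hx hs.1]) _)

/-- Two-sided asymptotics of the incomplete-beta-type integral
`I(u) = ∫₀¹ s^(-a) (u+s)^(-b) ds` for `a ∈ [0,1)`, `b ∈ ℝ`, uniformly in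
`u ∈ (0,1]`: it is comparable to `1` if `a+b < 1`, to `1 + log(1/u)` if
`a+b = 1`, and to `u^(1-a-b)` if `a+b > 1`. -/
theorem stmt_1 (a b : ℝ) (ha0 : 0 ≤ a) (ha1 : a < 1) :
    ∃ c C : ℝ, 0 < c ∧ 0 < C ∧ ∀ u ∈ Ioc (0 : ℝ) 1,
      (a + b < 1 →
        c ≤ ∫ s in (0 : ℝ)..1, s ^ (-a) * (u + s) ^ (-b) ∧
        (∫ s in (0 : ℝ)..1, s ^ (-a) * (u + s) ^ (-b)) ≤ C) ∧
      (a + b = 1 →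
        c * (1 + Real.log (1 / u)) ≤ ∫ s in (0 : ℝ)..1, s ^ (-a) * (u + s) ^ (-b) ∧
        (∫ s in (0 : ℝ)..1, s ^ (-a) * (u + s) ^ (-b)) ≤ C * (1 + Real.log (1 / u))) ∧
      (1 < a + b →
        c * u ^ (1 - a - b) ≤ ∫ s in (0 : ℝ)..1, s ^ (-a) * (u + s) ^ (-b) ∧
        (∫ s in (0 : ℝ)..1, s ^ (-a) * (u + s) ^ (-b)) ≤ C * u ^ (1 - a - b)) := by
  have halt : (-1:ℝ) < -a := by linarith
  have h2b : (0:ℝ) < 2 ^ (-b) := Real.rpow_pos_of_pos two_pos _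
  have h1a : (0:ℝ) < 1 - a := by linarith
  rcases lt_trichotomy (a + b) 1 with hab | hab | hab
  · -- a + b < 1
    refine ⟨min ((2:ℝ) ^ (-b) / (1 - a)) (1 / (1 - a - b)),
            max ((2:ℝ) ^ (-b) / (1 - a)) (1 / (1 - a - b)), ?_, ?_, ?_⟩
    · exact lt_min (div_pos h2b h1a) (div_pos one_pos (by linarith))
    · exact lt_of_lt_of_le (div_pos h2b h1a) (le_max_left _ _)
    intro u hu
    obtain ⟨hu0, hu1⟩ := hu
    refine ⟨fun _ => ⟨?_, ?_⟩, fun h' => by exfalso; linarith,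
      fun h' => by exfalso; linarith⟩
    · -- lower bound
      rcases le_or_gt 0 b with hb | hb
      · calc min ((2:ℝ) ^ (-b) / (1 - a)) (1 / (1 - a - b)) ≤ 2 ^ (-b) / (1 - a) :=
              min_le_left _ _
          _ = ∫ s in (0:ℝ)..1, 2 ^ (-b) * s ^ (-a) := by
              rw [intervalIntegral.integral_const_mul, int_rpow_zero ha1, Real.one_rpow]
              ring
          _ ≤ ∫ s in (0:ℝ)..1, s ^ (-a) * (u + s) ^ (-b) := by
              refine int_mono_Ioc zero_le_one
                ((intervalIntegral.intervalIntegrable_rpow' halt).const_mul _)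
                (intF ha1 hu0 le_rfl zero_le_one) (fun s hs => ?_)
              rw [mul_comm]
              exact mul_le_mul_of_nonneg_left
                (rpow_base_anti (by linarith [hs.1]) (by linarith [hs.2]) hb)
                (Real.rpow_nonneg hs.1.le _)
      · calc min ((2:ℝ) ^ (-b) / (1 - a)) (1 / (1 - a - b)) ≤ 1 / (1 - a - b) :=
              min_le_right _ _
          _ = ∫ s in (0:ℝ)..1, s ^ (-(a + b)) := by
              rw [int_rpow_zero (by linarith), Real.one_rpow,
                show 1 - (a + b) = 1 - a - b by ring]
          _ ≤ ∫ s in (0:ℝ)..1, s ^ (-a) * (u + s) ^ (-b) := by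
              refine int_mono_Ioc zero_le_one
                (intervalIntegral.intervalIntegrable_rpow' (by linarith))
                (intF ha1 hu0 le_rfl zero_le_one) (fun s hs => ?_)
              rw [show -(a + b) = -a + -b by ring, Real.rpow_add hs.1]
              exact mul_le_mul_of_nonneg_left
                (Real.rpow_le_rpow hs.1.le (by linarith) (by linarith))
                (Real.rpow_nonneg hs.1.le _)
    · -- upper bound
      rcases le_or_gt 0 b with hb | hb
      · calc (∫ s in (0:ℝ)..1, s ^ (-a) * (u + s) ^ (-b))
            ≤ ∫ s in (0:ℝ)..1, s ^ (-(a + b)) := by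
              refine int_mono_Ioc zero_le_one (intF ha1 hu0 le_rfl zero_le_one)
                (intervalIntegral.intervalIntegrable_rpow' (by linarith))
                (fun s hs => pt_upper (a := a) hb hu0.le hs.1)
          _ = 1 / (1 - a - b) := by
              rw [int_rpow_zero (by linarith), Real.one_rpow,
                show 1 - (a + b) = 1 - a - b by ring]
          _ ≤ _ := le_max_right _ _
      · calc (∫ s in (0:ℝ)..1, s ^ (-a) * (u + s) ^ (-b))
            ≤ ∫ s in (0:ℝ)..1, 2 ^ (-b) * s ^ (-a) := by
              refine int_mono_Ioc zero_le_one (intF ha1 hu0 le_rfl zero_le_one)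
                ((intervalIntegral.intervalIntegrable_rpow' halt).const_mul _)
                (fun s hs => ?_)
              rw [mul_comm]
              exact mul_le_mul_of_nonneg_right
                (Real.rpow_le_rpow (by linarith [hs.1]) (by linarith [hs.2])
                  (by linarith))
                (Real.rpow_nonneg hs.1.le _)
          _ = 2 ^ (-b) / (1 - a) := by
              rw [intervalIntegral.integral_const_mul, int_rpow_zero ha1, Real.one_rpow]
              ring
          _ ≤ _ := le_max_left _ _
  · -- a + b = 1
    have hb : 0 < b := by linarith
    refine ⟨min ((2:ℝ) ^ (-b) / (1 - a)) ((2:ℝ) ^ (-b)) / 2,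
            max (1 / (1 - a)) 1, ?_, ?_, ?_⟩
    · exact div_pos (lt_min (div_pos h2b h1a) h2b) two_pos
    · exact lt_of_lt_of_le one_pos (le_max_right _ _)
    intro u hu
    obtain ⟨hu0, hu1⟩ := hu
    have hL : 0 ≤ Real.log (1 / u) := by
      rw [one_div, Real.log_inv]
      linarith [Real.log_nonpos hu0.le hu1]
    have hsplit : (∫ s in (0:ℝ)..u, s ^ (-a) * (u + s) ^ (-b)) +
        (∫ s in u..1, s ^ (-a) * (u + s) ^ (-b)) =
        ∫ s in (0:ℝ)..1, s ^ (-a) * (u + s) ^ (-b) :=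
      intervalIntegral.integral_add_adjacent_intervals
        (intF ha1 hu0 le_rfl hu0.le) (intF ha1 hu0 hu0.le zero_le_one)
    have h0u : 0 ≤ ∫ s in (0:ℝ)..u, s ^ (-a) * (u + s) ^ (-b) :=
      F_nonneg hu0.le le_rfl hu0.le
    have hinv : IntervalIntegrable (fun s : ℝ => s ^ (-(1:ℝ))) volume u 1 :=
      intervalIntegrable_rpow (Or.inr (notMem_uIcc_of_lt hu0 one_pos))
    have htail : (∫ s in u..1, s ^ (-(1:ℝ))) = Real.log (1 / u) := by
      simp_rw [Real.rpow_neg_one]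
      rw [integral_inv (notMem_uIcc_of_lt hu0 one_pos)]
    refine ⟨fun h' => by exfalso; linarith, fun _ => ⟨?_, ?_⟩,
      fun h' => by exfalso; linarith⟩
    · -- lower bound
      have hA : 2 ^ (-b) / (1 - a) ≤ ∫ s in (0:ℝ)..1, s ^ (-a) * (u + s) ^ (-b) := by
        calc (2:ℝ) ^ (-b) / (1 - a) = ∫ s in (0:ℝ)..1, 2 ^ (-b) * s ^ (-a) := by
              rw [intervalIntegral.integral_const_mul, int_rpow_zero ha1, Real.one_rpow]
              ring
          _ ≤ _ := by
              refine int_mono_Ioc zero_le_one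
                ((intervalIntegral.intervalIntegrable_rpow' halt).const_mul _)
                (intF ha1 hu0 le_rfl zero_le_one) (fun s hs => ?_)
              rw [mul_comm]
              exact mul_le_mul_of_nonneg_left
                (rpow_base_anti (by linarith [hs.1]) (by linarith [hs.2]) hb.le)
                (Real.rpow_nonneg hs.1.le _)
      have hB : 2 ^ (-b) * Real.log (1 / u) ≤
          ∫ s in (0:ℝ)..1, s ^ (-a) * (u + s) ^ (-b) := by
        have step : (∫ s in u..1, (2:ℝ) ^ (-b) * s ^ (-(1:ℝ))) ≤
            ∫ s in u..1, s ^ (-a) * (u + s) ^ (-b) := by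
          refine int_mono_Ioc hu1 (hinv.const_mul _)
            (intF ha1 hu0 hu0.le zero_le_one) (fun s hs => ?_)
          have hs0 : (0:ℝ) < s := lt_trans hu0 hs.1
          have h2s : ((2:ℝ) * s) ^ (-b) ≤ (u + s) ^ (-b) :=
            Real.rpow_le_rpow_of_nonpos (by linarith)
              (by linarith [hs.1]) (by linarith)
          have e1 : s ^ (-(1:ℝ)) = s ^ (-a) * s ^ (-b) := by
            rw [← Real.rpow_add hs0, show -a + -b = -(1:ℝ) by linarith]
          calc (2:ℝ) ^ (-b) * s ^ (-(1:ℝ)) = s ^ (-a) * ((2:ℝ) * s) ^ (-b) := by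
                rw [e1, Real.mul_rpow (by norm_num) hs0.le]; ring
            _ ≤ s ^ (-a) * (u + s) ^ (-b) :=
                mul_le_mul_of_nonneg_left h2s (Real.rpow_nonneg hs0.le _)
        rw [intervalIntegral.integral_const_mul, htail] at step
        linarith [hsplit, h0u]
      set L := Real.log (1 / u)
      have hmin1 : min ((2:ℝ) ^ (-b) / (1 - a)) ((2:ℝ) ^ (-b)) ≤ 2 ^ (-b) / (1 - a) :=
        min_le_left _ _
      have hmin2 : min ((2:ℝ) ^ (-b) / (1 - a)) ((2:ℝ) ^ (-b)) ≤ 2 ^ (-b) :=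
        min_le_right _ _
      nlinarith [hA, hB, hL]
    · -- upper bound
      have hA : (∫ s in (0:ℝ)..u, s ^ (-a) * (u + s) ^ (-b)) ≤ 1 / (1 - a) := by
        calc (∫ s in (0:ℝ)..u, s ^ (-a) * (u + s) ^ (-b))
            ≤ ∫ s in (0:ℝ)..u, s ^ (-a) * u ^ (-b) := by
              refine int_mono_Ioc hu0.le (intF ha1 hu0 le_rfl hu0.le)
                ((intervalIntegral.intervalIntegrable_rpow' halt).mul_const _)
                (fun s hs => mul_le_mul_of_nonneg_left
                  (rpow_base_anti hu0 (by linarith [hs.1]) hb.le)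
                  (Real.rpow_nonneg hs.1.le _))
          _ = 1 / (1 - a) := by
              rw [intervalIntegral.integral_mul_const, int_rpow_zero ha1,
                div_mul_eq_mul_div, ← Real.rpow_add hu0,
                show 1 - a + -b = 0 by linarith, Real.rpow_zero]
      have hB : (∫ s in u..1, s ^ (-a) * (u + s) ^ (-b)) ≤ Real.log (1 / u) := by
        calc (∫ s in u..1, s ^ (-a) * (u + s) ^ (-b))
            ≤ ∫ s in u..1, s ^ (-(1:ℝ)) := by
              refine int_mono_Ioc hu1 (intF ha1 hu0 hu0.le zero_le_one) hinv
                (fun s hs => ?_)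
              have := pt_upper (a := a) hb.le hu0.le (lt_trans hu0 hs.1)
              rwa [show -(a + b) = -(1:ℝ) by linarith] at this
          _ = Real.log (1 / u) := htail
      set L := Real.log (1 / u)
      have hC1 : 1 / (1 - a) ≤ max (1 / (1 - a)) 1 := le_max_left _ _
      have hC2 : (1:ℝ) ≤ max (1 / (1 - a)) 1 := le_max_right _ _
      nlinarith [hA, hB, hL, hsplit]
  · -- 1 < a + b
    have hb : 0 < b := by linarith
    refine ⟨(2:ℝ) ^ (-b) / (1 - a), 1 / (1 - a) + 1 / (a + b - 1), div_pos h2b h1a,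
      by have h1 := div_pos one_pos h1a
         have h2 := div_pos one_pos (by linarith : (0:ℝ) < a + b - 1)
         linarith, ?_⟩
    intro u hu
    obtain ⟨hu0, hu1⟩ := hu
    have hsplit : (∫ s in (0:ℝ)..u, s ^ (-a) * (u + s) ^ (-b)) +
        (∫ s in u..1, s ^ (-a) * (u + s) ^ (-b)) =
        ∫ s in (0:ℝ)..1, s ^ (-a) * (u + s) ^ (-b) :=
      intervalIntegral.integral_add_adjacent_intervals
        (intF ha1 hu0 le_rfl hu0.le) (intF ha1 hu0 hu0.le zero_le_one)
    have hu1int : 0 ≤ ∫ s in u..1, s ^ (-a) * (u + s) ^ (-b) :=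
      F_nonneg hu0.le hu0.le hu1
    refine ⟨fun h' => by exfalso; linarith, fun h' => by exfalso; linarith,
      fun _ => ⟨?_, ?_⟩⟩
    · -- lower bound
      have key : (2:ℝ) ^ (-b) / (1 - a) * u ^ (1 - a - b) ≤
          ∫ s in (0:ℝ)..u, s ^ (-a) * (u + s) ^ (-b) := by
        calc (2:ℝ) ^ (-b) / (1 - a) * u ^ (1 - a - b)
            = (∫ s in (0:ℝ)..u, s ^ (-a)) * ((2:ℝ) * u) ^ (-b) := by
              rw [int_rpow_zero ha1, Real.mul_rpow (by norm_num) hu0.le,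
                show (1:ℝ) - a - b = (1 - a) + -b by ring, Real.rpow_add hu0]
              ring
          _ = ∫ s in (0:ℝ)..u, s ^ (-a) * ((2:ℝ) * u) ^ (-b) :=
              (intervalIntegral.integral_mul_const _ _).symm
          _ ≤ ∫ s in (0:ℝ)..u, s ^ (-a) * (u + s) ^ (-b) := by
              refine int_mono_Ioc hu0.le
                ((intervalIntegral.intervalIntegrable_rpow' halt).mul_const _)
                (intF ha1 hu0 le_rfl hu0.le) (fun s hs => ?_)
              exact mul_le_mul_of_nonneg_left
                (Real.rpow_le_rpow_of_nonpos (by linarith [hs.1])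
                  (by linarith [hs.2]) (by linarith))
                (Real.rpow_nonneg hs.1.le _)
      linarith
    · -- upper bound
      have hA : (∫ s in (0:ℝ)..u, s ^ (-a) * (u + s) ^ (-b)) ≤
          u ^ (1 - a - b) / (1 - a) := by
        calc (∫ s in (0:ℝ)..u, s ^ (-a) * (u + s) ^ (-b))
            ≤ ∫ s in (0:ℝ)..u, s ^ (-a) * u ^ (-b) := by
              refine int_mono_Ioc hu0.le (intF ha1 hu0 le_rfl hu0.le)
                ((intervalIntegral.intervalIntegrable_rpow' halt).mul_const _)
                (fun s hs => mul_le_mul_of_nonneg_left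
                  (rpow_base_anti hu0 (by linarith [hs.1]) hb.le)
                  (Real.rpow_nonneg hs.1.le _))
          _ = u ^ (1 - a - b) / (1 - a) := by
              rw [intervalIntegral.integral_mul_const, int_rpow_zero ha1,
                div_mul_eq_mul_div, ← Real.rpow_add hu0,
                show 1 - a + -b = 1 - a - b by ring]
      have hB : (∫ s in u..1, s ^ (-a) * (u + s) ^ (-b)) ≤
          u ^ (1 - a - b) / (a + b - 1) := by
        calc (∫ s in u..1, s ^ (-a) * (u + s) ^ (-b))
            ≤ ∫ s in u..1, s ^ (-(a + b)) := by
              refine int_mono_Ioc hu1 (intF ha1 hu0 hu0.le zero_le_one)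
                (intervalIntegrable_rpow (Or.inr (notMem_uIcc_of_lt hu0 one_pos)))
                (fun s hs => pt_upper (a := a) hb.le hu0.le (lt_trans hu0 hs.1))
          _ = (1 - u ^ (1 - a - b)) / (1 - a - b) := by
              rw [integral_rpow (Or.inr ⟨ne_of_lt (by linarith),
                notMem_uIcc_of_lt hu0 one_pos⟩), Real.one_rpow,
                show -(a + b) + 1 = 1 - a - b by ring]
          _ = (u ^ (1 - a - b) - 1) / (a + b - 1) := by
              rw [div_eq_div_iff (by linarith) (by linarith)]; ring
          _ ≤ u ^ (1 - a - b) / (a + b - 1) :=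
              (div_le_div_iff_of_pos_right (by linarith)).mpr (by linarith)
      calc (∫ s in (0:ℝ)..1, s ^ (-a) * (u + s) ^ (-b))
          = (∫ s in (0:ℝ)..u, s ^ (-a) * (u + s) ^ (-b)) +
            (∫ s in u..1, s ^ (-a) * (u + s) ^ (-b)) := hsplit.symm
        _ ≤ u ^ (1 - a - b) / (1 - a) + u ^ (1 - a - b) / (a + b - 1) :=
            add_le_add hA hB
        _ = (1 / (1 - a) + 1 / (a + b - 1)) * u ^ (1 - a - b) := by ring
end

section
/- Let n ∈ ℕ be positive and p ∈ ℕ odd with p > n − 2. Then for all real numbers a, b: |a^(2p+n−2) − b^(2p+n−2)| ≤ ((2p+n−2)/p) · (|a|^(p+n−2) + |b|^(p+n−2)) · |a^p − b^p|. -/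
-- Bernoulli-type: 1 - t^m ≤ (m/p) (1 - t^p) for t ∈ [0,1], 0 < p ≤ m
lemma bern (m p : ℕ) (hp0 : 0 < p) (hpm : p ≤ m) {t : ℝ} (ht0 : 0 ≤ t) (ht1 : t ≤ 1) :
    1 - t ^ m ≤ (m : ℝ) / p * (1 - t ^ p) := by
  set s : ℝ := (m : ℝ) / p with hs
  have hs1 : 1 ≤ s := (one_le_div (by exact_mod_cast hp0)).2 (by exact_mod_cast hpm)
  have hu0 : 0 ≤ t ^ p := pow_nonneg ht0 p
  have hu1 : t ^ p ≤ 1 := pow_le_one₀ ht0 ht1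
  have hB : 1 + s * (t ^ p - 1) ≤ (1 + (t ^ p - 1)) ^ s :=
    one_add_mul_self_le_rpow_one_add (by linarith) hs1
  have hrw : (1 + (t ^ p - 1) : ℝ) ^ s = t ^ m := by
    have h1 : (1 + (t ^ p - 1) : ℝ) = t ^ p := by ring
    rw [h1]
    rw [← Real.rpow_natCast t p, ← Real.rpow_natCast t m, ← Real.rpow_mul ht0]
    congr 1
    field_simp [hs]
    rw [hs]; field_simp [(by exact_mod_cast hp0.ne' : (p:ℝ) ≠ 0)]
  rw [hrw] at hB
  linarith

lemma aux (m p : ℕ) (hp0 : 0 < p) (hpm : p ≤ m) {x y : ℝ} (hy : 0 ≤ y) (hxy : y ≤ x) :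
    x ^ m - y ^ m ≤ (m : ℝ) / p * x ^ (m - p) * (x ^ p - y ^ p) := by
  have hx : 0 ≤ x := hy.trans hxy
  rcases eq_or_lt_of_le hx with h0 | hx0
  · have hx0 : x = 0 := h0.symm
    have hy0 : y = 0 := le_antisymm (hxy.trans_eq hx0) hy
    simp [hx0, hy0, zero_pow (by omega : m ≠ 0), zero_pow (by omega : p ≠ 0)]
  · have ht0 : 0 ≤ y / x := div_nonneg hy hx
    have ht1 : y / x ≤ 1 := div_le_one_of_le₀ hxy hx
    have h := bern m p hp0 hpm ht0 ht1
    have hxm : (0:ℝ) < x ^ m := pow_pos hx0 m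
    have key : x ^ m * (1 - (y/x) ^ m) ≤ x ^ m * ((m : ℝ) / p * (1 - (y/x) ^ p)) :=
      mul_le_mul_of_nonneg_left h hxm.le
    have e1 : x ^ m * (1 - (y/x) ^ m) = x ^ m - y ^ m := by
      rw [div_pow, mul_sub, mul_one, ← mul_div_assoc, mul_div_cancel_left₀ _ (pow_ne_zero m hx0.ne')]
    have e2 : x ^ m * ((m : ℝ) / p * (1 - (y/x) ^ p)) =
        (m : ℝ) / p * x ^ (m - p) * (x ^ p - y ^ p) := by
      have hsplit : x ^ m = x ^ (m - p) * x ^ p := by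
        rw [← pow_add]; congr 1; omega
      field_simp [hx0.ne']
      have hinv : x ^ p * x⁻¹ ^ p = 1 := by rw [← mul_pow, mul_inv_cancel₀ hx0.ne', one_pow]
      rw [hsplit]; linear_combination (-(x ^ (m - p)) * (m : ℝ) * y ^ p) * hinv
    rw [e1, e2] at key
    exact key

lemma key (m p : ℕ) (hp : Odd p) (hpm : p ≤ m) (a b : ℝ) :
    |a ^ m - b ^ m| ≤
      (m : ℝ) / p * (|a| ^ (m - p) + |b| ^ (m - p)) * |a ^ p - b ^ p| := by
  have hp0 : 0 < p := hp.pos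
  have hsp : (1:ℝ) ≤ (m : ℝ) / p := (one_le_div (by exact_mod_cast hp0)).2 (by exact_mod_cast hpm)
  -- reduce to |b| ≤ |a|
  wlog h1 : |b| ≤ |a| generalizing a b with H
  · have := H b a (le_of_not_ge h1)
    rw [abs_sub_comm (b ^ m), abs_sub_comm (b ^ p), add_comm (|b| ^ (m-p))] at this
    exact this
  -- reduce to 0 ≤ a
  wlog h2 : 0 ≤ a generalizing a b with H
  · have := H (-a) (-b) (by simpa using h1) (by simpa using le_of_not_ge h2)
    have ena : (-a) ^ m - (-b) ^ m = (-1:ℝ)^m * (a ^ m - b ^ m) := by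
      rw [neg_pow, neg_pow]; ring
    have enp : (-a) ^ p - (-b) ^ p = -(a ^ p - b ^ p) := by
      rw [hp.neg_pow, hp.neg_pow]; ring
    rw [ena, enp, abs_mul, abs_pow, abs_neg, abs_one, one_pow, one_mul, abs_neg,
      abs_neg, abs_neg] at this
    exact this
  have ha : |a| = a := abs_of_nonneg h2
  rcases le_or_gt 0 b with hb | hb
  · -- 0 ≤ b ≤ a
    have hb' : b ≤ a := by rwa [ha, abs_of_nonneg hb] at h1
    have hba : b ^ m ≤ a ^ m := pow_le_pow_left₀ hb hb' m
    have hbp : b ^ p ≤ a ^ p := pow_le_pow_left₀ hb hb' p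
    rw [ha, abs_of_nonneg hb, abs_of_nonneg (by linarith : (0:ℝ) ≤ a ^ m - b ^ m),
      abs_of_nonneg (by linarith : (0:ℝ) ≤ a ^ p - b ^ p)]
    calc a ^ m - b ^ m ≤ (m : ℝ) / p * a ^ (m - p) * (a ^ p - b ^ p) :=
          aux m p hp0 hpm hb hb'
      _ ≤ (m : ℝ) / p * (a ^ (m - p) + b ^ (m - p)) * (a ^ p - b ^ p) := by
          apply mul_le_mul_of_nonneg_right _ (by linarith)
          apply mul_le_mul_of_nonneg_left _ (by linarith)
          nlinarith [pow_nonneg hb (m - p)]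
  · -- b < 0 ≤ a ; set c = -b
    set c : ℝ := -b with hc
    have hc0 : 0 ≤ c := by simp [hc]; linarith
    have hca : c ≤ a := by rwa [ha, abs_of_neg hb] at h1
    have ebp : b ^ p = -(c ^ p) := by rw [hc] at *; rw [← hp.neg_pow]; ring_nf
    have habs : |a ^ p - b ^ p| = a ^ p + c ^ p := by
      rw [ebp]
      have : a ^ p - -(c ^ p) = a ^ p + c ^ p := by ring
      rw [this, abs_of_nonneg (by positivity)]
    have hlhs : |a ^ m - b ^ m| ≤ a ^ m + c ^ m := by
      calc |a ^ m - b ^ m| ≤ |a ^ m| + |b ^ m| := abs_sub _ _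
        _ = a ^ m + c ^ m := by
            rw [abs_pow, abs_pow, ha, abs_of_neg hb]
    have hbs : |b| = c := abs_of_neg hb
    rw [ha, hbs, habs]
    refine hlhs.trans ?_
    have hfact : a ^ m + c ^ m ≤ (a ^ (m - p) + c ^ (m - p)) * (a ^ p + c ^ p) := by
      have ea : a ^ (m - p) * a ^ p = a ^ m := by rw [← pow_add]; congr 1; omega
      have ec : c ^ (m - p) * c ^ p = c ^ m := by rw [← pow_add]; congr 1; omega
      nlinarith [mul_nonneg (pow_nonneg h2 (m-p)) (pow_nonneg hc0 p),
        mul_nonneg (pow_nonneg hc0 (m-p)) (pow_nonneg h2 p)]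
    calc a ^ m + c ^ m ≤ (a ^ (m - p) + c ^ (m - p)) * (a ^ p + c ^ p) := hfact
      _ ≤ (m : ℝ) / p * (a ^ (m - p) + c ^ (m - p)) * (a ^ p + c ^ p) := by
          apply mul_le_mul_of_nonneg_right _ (by positivity)
          nlinarith [pow_nonneg h2 (m-p), pow_nonneg hc0 (m-p)]

/-- Elementary pointwise inequality for odd powers: for `n ≥ 1`, `p` odd with
`p > n - 2`, and all reals `a, b`,
`|a^(2p+n−2) − b^(2p+n−2)| ≤ ((2p+n−2)/p) (|a|^(p+n−2) + |b|^(p+n−2)) |a^p − b^p|`. -/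
theorem stmt_2 (n p : ℕ) (hn : 0 < n) (hp : Odd p) (hpn : n < p + 2) (a b : ℝ) :
    |a ^ (2 * p + n - 2) - b ^ (2 * p + n - 2)| ≤
      ((2 * p + n - 2 : ℕ) : ℝ) / (p : ℝ) *
        (|a| ^ (p + n - 2) + |b| ^ (p + n - 2)) * |a ^ p - b ^ p| := by
  have hp0 : 0 < p := hp.pos
  have hpm : p ≤ 2 * p + n - 2 := by omega
  have hsub : 2 * p + n - 2 - p = p + n - 2 := by omega
  have := key (2 * p + n - 2) p hp hpm a b
  rwa [hsub] at this
end

section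
/- Let c > 0, k ∈ ℕ, β ∈ ℝ, d_w > 0 with k > β/d_w and consider, for 0 ≤ s < t and τ ∈ (0,1], the quantity m(τ, t−s) = (τ/(t−s+τ))^k (t−s+τ)^{β/d_w}. Then for any η ≥ 1 with conjugate η' = η/(η−1), and k chosen so large that βη/d_w − kη < −1: ∫₀^t m(τ, t−s) ds ≤ C t^{1/η'} τ^{(β + d_w/η)/d_w} for all t, τ ∈ (0,1], with C depending only on k, β, η, d_w. -/
open Set MeasureTheory intervalIntegral

lemma aux_eq (k : ℕ) (γ : ℝ) {t τ : ℝ} (ht : 0 < t) (hτ : 0 < τ) :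
    (∫ s in (0:ℝ)..t, (τ / (t - s + τ)) ^ k * (t - s + τ) ^ γ)
      = τ ^ k * ∫ u in τ..(t+τ), u ^ (γ - k) := by
  have h1 : (∫ s in (0:ℝ)..t, (τ / (t - s + τ)) ^ k * (t - s + τ) ^ γ)
      = ∫ s in (0:ℝ)..t, (fun x => (τ / (x + τ)) ^ k * (x + τ) ^ γ) (t - s) := rfl
  rw [h1, intervalIntegral.integral_comp_sub_left (fun x => (τ / (x + τ)) ^ k * (x + τ) ^ γ) t, sub_self, sub_zero]
  rw [intervalIntegral.integral_comp_add_right (fun u => (τ / u) ^ k * u ^ γ) τ,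
    zero_add]
  rw [← intervalIntegral.integral_const_mul]
  apply intervalIntegral.integral_congr
  intro u hu
  have hu0 : 0 < u := by
    rw [uIcc_of_le (by linarith : τ ≤ t + τ)] at hu
    exact lt_of_lt_of_le hτ hu.1
  simp only
  rw [div_pow, Real.rpow_sub hu0, Real.rpow_natCast]
  field_simp

/-- Quantitative kernel computation inside the Schauder estimate: with
`m(τ, t−s) = (τ/(t−s+τ))^k (t−s+τ)^{β/d_w}`, for any `η ≥ 1` with conjugate
`η' = η/(η−1)` and `k` so large that `βη/d_w − kη < −1`, one has
`∫₀^t m(τ, t−s) ds ≤ C t^{1/η'} τ^{(β + d_w/η)/d_w}` for all `t, τ ∈ (0,1]`,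
with `C` depending only on `k, β, η, d_w`. -/
theorem stmt_15 (k : ℕ) (β d_w η : ℝ) (hdw : 0 < d_w)
    (hkβ : β / d_w < (k : ℝ)) (hη : 1 ≤ η)
    (hlarge : β * η / d_w - (k : ℝ) * η < -1) :
    ∃ C : ℝ, 0 < C ∧ ∀ t ∈ Ioc (0 : ℝ) 1, ∀ τ ∈ Ioc (0 : ℝ) 1,
      (∫ s in (0 : ℝ)..t,
          (τ / (t - s + τ)) ^ k * (t - s + τ) ^ (β / d_w)) ≤
        C * t ^ (1 / (η / (η - 1))) * τ ^ ((β + d_w / η) / d_w) := by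
  have hη0 : (0:ℝ) < η := by linarith
  have hdw' : d_w ≠ 0 := ne_of_gt hdw
  set α : ℝ := β / d_w - k with hαdef
  clear_value α
  have hαη : α * η < -1 := by
    have h2 : α * η = β * η / d_w - k * η := by rw [hαdef]; ring
    linarith
  have hα : α < -1 / η := (lt_div_iff₀ hη0).2 hαη
  rcases eq_or_lt_of_le hη with heq | hη1
  · -- η = 1
    subst heq
    have hα1 : α < -1 := by rw [neg_div, div_one] at hα; linarith
    have hc : (0:ℝ) < -(α + 1) := by linarith
    refine ⟨(-(α + 1))⁻¹, inv_pos.2 hc, ?_⟩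
    rintro t ⟨ht, ht1⟩ τ ⟨hτ, hτ1⟩
    have hE : (1:ℝ) / ((1:ℝ) / ((1:ℝ) - 1)) = 0 := by norm_num
    rw [hE, Real.rpow_zero, mul_one]
    have h0 : (0:ℝ) ∉ Set.uIcc τ (t + τ) := by
      rw [uIcc_of_le (by linarith : τ ≤ t + τ)]
      intro h; exact absurd h.1 (by linarith)
    rw [aux_eq k (β / d_w) ht hτ]
    simp only [← hαdef]
    rw [integral_rpow (Or.inr ⟨ne_of_lt hα1, h0⟩)]
    have hA0 : (0:ℝ) ≤ (t + τ) ^ (α + 1) := Real.rpow_nonneg (by linarith) _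
    have hAB : (t + τ) ^ (α + 1) ≤ τ ^ (α + 1) :=
      Real.rpow_le_rpow_of_nonpos hτ (by linarith) (by linarith)
    have hJ : ((t + τ) ^ (α + 1) - τ ^ (α + 1)) / (α + 1)
        ≤ τ ^ (α + 1) * (-(α + 1))⁻¹ := by
      have h1 : ((t + τ) ^ (α + 1) - τ ^ (α + 1)) / (α + 1)
          = (τ ^ (α + 1) - (t + τ) ^ (α + 1)) / (-(α + 1)) := by
        rw [div_neg, ← neg_div, neg_sub]
      rw [h1, ← div_eq_mul_inv]
      exact div_le_div_of_nonneg_right (by linarith) hc.le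
    calc τ ^ k * (((t + τ) ^ (α + 1) - τ ^ (α + 1)) / (α + 1))
        ≤ τ ^ k * (τ ^ (α + 1) * (-(α + 1))⁻¹) :=
          mul_le_mul_of_nonneg_left hJ (pow_nonneg hτ.le _)
      _ = (-(α + 1))⁻¹ * τ ^ ((β + d_w / 1) / d_w) := by
          rw [← Real.rpow_natCast τ k, ← mul_assoc, ← Real.rpow_add hτ]
          have he : (k:ℝ) + (α + 1) = (β + d_w / 1) / d_w := by
            rw [hαdef]; field_simp; ring
          rw [he]; ring
  · -- 1 < η
    set p : ℝ := 1 / η with hpdef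
    clear_value p
    have hp0 : 0 < p := by rw [hpdef]; positivity
    have hp1 : p < 1 := by rw [hpdef, div_lt_one hη0]; exact hη1
    have hα' : α < -p := by
      rw [neg_div] at hα; rw [← hpdef] at hα; exact hα
    have hαp : α + p < 0 := by linarith
    have h1p : (0:ℝ) < 1 - p := by linarith
    refine ⟨2 / (1 - p), by positivity, ?_⟩
    rintro t ⟨ht, ht1⟩ τ ⟨hτ, hτ1⟩
    have hE1 : 1 / (η / (η - 1)) = 1 - p := by
      rw [one_div_div, hpdef, sub_div, div_self (ne_of_gt hη0)]
    have hE2 : (β + d_w / η) / d_w = β / d_w + p := by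
      rw [add_div, hpdef, div_right_comm, div_self hdw']
    rw [hE1, hE2, aux_eq k (β / d_w) ht hτ]
    simp only [← hαdef]
    have h0 : (0:ℝ) ∉ Set.uIcc τ (t + τ) := by
      rw [uIcc_of_le (by linarith : τ ≤ t + τ)]
      intro h; exact absurd h.1 (by linarith)
    rcases le_total t τ with htτ | htτ
    · -- t ≤ τ
      have hJ : (∫ u in τ..(t+τ), u ^ α) ≤ t * τ ^ α := by
        have := intervalIntegral.integral_mono_on (by linarith : τ ≤ t + τ)
          (intervalIntegrable_rpow (Or.inr h0))
          (intervalIntegrable_const (μ := volume) (c := τ ^ α))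
          (fun u hu => Real.rpow_le_rpow_of_nonpos hτ hu.1 (by linarith))
        rwa [intervalIntegral.integral_const, add_sub_cancel_right, smul_eq_mul] at this
      calc τ ^ k * ∫ u in τ..(t+τ), u ^ α
          ≤ τ ^ k * (t * τ ^ α) := mul_le_mul_of_nonneg_left hJ (pow_nonneg hτ.le _)
        _ = t ^ (1 - p) * t ^ p * τ ^ (β / d_w) := by
            rw [← Real.rpow_natCast τ k,
              show τ ^ ((k:ℝ)) * (t * τ ^ α) = t * (τ ^ ((k:ℝ)) * τ ^ α) from by ring,
              ← Real.rpow_add hτ,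
              show (k:ℝ) + α = β / d_w from by rw [hαdef]; ring,
              ← Real.rpow_add ht, show (1:ℝ) - p + p = 1 from by ring, Real.rpow_one]
        _ ≤ t ^ (1 - p) * τ ^ p * τ ^ (β / d_w) := by
            apply mul_le_mul_of_nonneg_right
              (mul_le_mul_of_nonneg_left (Real.rpow_le_rpow ht.le htτ hp0.le)
                (Real.rpow_nonneg ht.le _))
              (Real.rpow_nonneg hτ.le _)
        _ ≤ 2 / (1 - p) * t ^ (1 - p) * τ ^ (β / d_w + p) := by
            rw [Real.rpow_add hτ]
            have h1 : (1:ℝ) ≤ 2 / (1 - p) := by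
              rw [le_div_iff₀ h1p]; linarith
            nlinarith [Real.rpow_nonneg ht.le (1 - p), Real.rpow_nonneg hτ.le p,
              Real.rpow_nonneg hτ.le (β / d_w),
              mul_nonneg (Real.rpow_nonneg ht.le (1 - p))
                (mul_nonneg (Real.rpow_nonneg hτ.le p) (Real.rpow_nonneg hτ.le (β / d_w)))]
    · -- τ ≤ t
      have hptwise : ∀ u ∈ Icc τ (t + τ), u ^ α ≤ τ ^ (α + p) * u ^ (-p) := by
        intro u hu
        have hu0 : 0 < u := lt_of_lt_of_le hτ hu.1
        have h1 : u ^ α = u ^ (α + p) * u ^ (-p) := by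
          rw [← Real.rpow_add hu0]; ring_nf
        rw [h1]
        exact mul_le_mul_of_nonneg_right
          (Real.rpow_le_rpow_of_nonpos hτ hu.1 hαp.le)
          (Real.rpow_nonneg hu0.le _)
      have hJ : (∫ u in τ..(t+τ), u ^ α)
          ≤ τ ^ (α + p) * ∫ u in τ..(t+τ), u ^ (-p) := by
        rw [← intervalIntegral.integral_const_mul]
        exact intervalIntegral.integral_mono_on (by linarith : τ ≤ t + τ)
          (intervalIntegrable_rpow (Or.inr h0))
          ((intervalIntegrable_rpow' (by linarith : (-1:ℝ) < -p)).const_mul _)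
          hptwise
      have hInt : (∫ u in τ..(t+τ), u ^ (-p)) ≤ 2 / (1 - p) * t ^ (1 - p) := by
        rw [integral_rpow (Or.inl (by linarith : (-1:ℝ) < -p))]
        have h2t : t + τ ≤ 2 * t := by linarith
        have h1 : (t + τ) ^ (-p + 1) ≤ (2 * t) ^ (-p + 1) :=
          Real.rpow_le_rpow (by linarith) h2t (by linarith)
        have h2 : (2 * t) ^ (-p + 1) = 2 ^ (-p + 1) * t ^ (-p + 1) :=
          Real.mul_rpow (by norm_num) ht.le
        have h3 : (2:ℝ) ^ (-p + 1) ≤ 2 := by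
          nth_rewrite 2 [← Real.rpow_one 2]
          exact Real.rpow_le_rpow_of_exponent_le one_le_two (by linarith)
        have h4 : (0:ℝ) ≤ τ ^ (-p + 1) := Real.rpow_nonneg hτ.le _
        have h5 : (0:ℝ) ≤ t ^ (-p + 1) := Real.rpow_nonneg ht.le _
        rw [div_le_iff₀ (by linarith : (0:ℝ) < -p + 1)]
        calc (t + τ) ^ (-p + 1) - τ ^ (-p + 1)
            ≤ 2 ^ (-p + 1) * t ^ (-p + 1) := by rw [← h2]; linarith
          _ ≤ 2 * t ^ (-p + 1) := mul_le_mul_of_nonneg_right h3 h5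
          _ = 2 / (1 - p) * t ^ (1 - p) * (-p + 1) := by
              rw [show (-p + 1) = 1 - p from by ring]
              field_simp
      calc τ ^ k * ∫ u in τ..(t+τ), u ^ α
          ≤ τ ^ k * (τ ^ (α + p) * (2 / (1 - p) * t ^ (1 - p))) := by
            apply mul_le_mul_of_nonneg_left _ (pow_nonneg hτ.le _)
            exact le_trans hJ (mul_le_mul_of_nonneg_left hInt
              (Real.rpow_nonneg hτ.le _))
        _ = 2 / (1 - p) * t ^ (1 - p) * τ ^ (β / d_w + p) := by
            rw [← Real.rpow_natCast τ k,
              show τ ^ ((k:ℝ)) * (τ ^ (α + p) * (2 / (1 - p) * t ^ (1 - p)))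
                = 2 / (1 - p) * t ^ (1 - p) * (τ ^ ((k:ℝ)) * τ ^ (α + p)) from by ring,
              ← Real.rpow_add hτ,
              show (k:ℝ) + (α + p) = β / d_w + p from by rw [hαdef]; ring]
end
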